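/- In the lattice Z^6 with basis (Z_∞, F, Ẽ0, Ẽ1, Ẽ2, Ẽ3) and intersection form Q(Z_∞,Z_∞)=-4, Q(Z_∞,F)=1, Q(F,F)=0, Q(Ẽi,Ẽi)=-1, other mixed pairings zero, suppose C = ν_f F + ν_∞ Z_∞ - Σ νi Ẽi satisfies: ν0 ≥ ν1 + ν2 + ν3, ν_f ≥ 4ν_∞, ν_∞ ≥ 0, νi ≥ 0 for all i, and ν_∞ ≥ ν0. Let α, β, μ̃0, μ̃1, μ̃2, μ̃3 be reals with μ̃i > 0, β - μ̃0 > 0, α - 4β > 0, β > 0, and α ≥ μ̃0 + μ̃1 + μ̃2 + μ̃3. Then (α - 4β)ν_∞ + βν_f - Σ νi μ̃i ≥ 0, with equality only if C = 0. -/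
import Mathlib


/-- Nakai–Moishezon positivity computation in the Kähler cone lemma:
the candidate Kähler class evaluates non-negatively on the curve class
C = ν_f F + ν_∞ Z∞ - Σ νi Ẽi, with equality only if C = 0. -/
theorem stmt_5 (νf νinf ν0 ν1 ν2 ν3 : ℤ)
    (c1 : ν0 ≥ ν1 + ν2 + ν3) (c2 : νf ≥ 4 * νinf) (c3 : νinf ≥ 0)
    (c4 : ν0 ≥ 0) (c5 : ν1 ≥ 0) (c6 : ν2 ≥ 0) (c7 : ν3 ≥ 0)
    (c8 : νinf ≥ ν0)
    (α β μ0 μ1 μ2 μ3 : ℝ)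
    (m0 : μ0 > 0) (m1 : μ1 > 0) (m2 : μ2 > 0) (m3 : μ3 > 0)
    (hβμ : β - μ0 > 0) (hαβ : α - 4 * β > 0) (hβ : β > 0)
    (hα : α ≥ μ0 + μ1 + μ2 + μ3) :
    (α - 4 * β) * (νinf : ℝ) + β * (νf : ℝ)
        - ((ν0 : ℝ) * μ0 + (ν1 : ℝ) * μ1 + (ν2 : ℝ) * μ2 + (ν3 : ℝ) * μ3) ≥ 0 ∧
    ((α - 4 * β) * (νinf : ℝ) + β * (νf : ℝ)
        - ((ν0 : ℝ) * μ0 + (ν1 : ℝ) * μ1 + (ν2 : ℝ) * μ2 + (ν3 : ℝ) * μ3) = 0 →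
      νf = 0 ∧ νinf = 0 ∧ ν0 = 0 ∧ ν1 = 0 ∧ ν2 = 0 ∧ ν3 = 0) := by
  -- real versions of integer hypotheses
  have r1 : (ν0 : ℝ) ≥ (ν1 : ℝ) + (ν2 : ℝ) + (ν3 : ℝ) := by exact_mod_cast c1
  have r2 : (νf : ℝ) ≥ 4 * (νinf : ℝ) := by exact_mod_cast c2
  have r3 : (νinf : ℝ) ≥ 0 := by exact_mod_cast c3
  have r4 : (ν0 : ℝ) ≥ 0 := by exact_mod_cast c4
  have r5 : (ν1 : ℝ) ≥ 0 := by exact_mod_cast c5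
  have r6 : (ν2 : ℝ) ≥ 0 := by exact_mod_cast c6
  have r7 : (ν3 : ℝ) ≥ 0 := by exact_mod_cast c7
  have r8 : (νinf : ℝ) ≥ (ν0 : ℝ) := by exact_mod_cast c8
  -- decomposition into nonnegative terms
  have key : (α - 4 * β) * (νinf : ℝ) + β * (νf : ℝ)
      - ((ν0 : ℝ) * μ0 + (ν1 : ℝ) * μ1 + (ν2 : ℝ) * μ2 + (ν3 : ℝ) * μ3)
      = ((νf : ℝ) - 4 * νinf) * β + (α - (μ0 + μ1 + μ2 + μ3)) * νinf
        + ((νinf : ℝ) - ν0) * μ0 + ((νinf : ℝ) - ν1) * μ1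
        + ((νinf : ℝ) - ν2) * μ2 + ((νinf : ℝ) - ν3) * μ3 := by ring
  have t1 : ((νf : ℝ) - 4 * νinf) * β ≥ 0 := by
    apply mul_nonneg <;> linarith
  have t2 : (α - (μ0 + μ1 + μ2 + μ3)) * (νinf : ℝ) ≥ 0 := by
    apply mul_nonneg <;> linarith
  have t3 : ((νinf : ℝ) - ν0) * μ0 ≥ 0 := by apply mul_nonneg <;> linarith
  have t4 : ((νinf : ℝ) - ν1) * μ1 ≥ 0 := by apply mul_nonneg <;> linarith
  have t5 : ((νinf : ℝ) - ν2) * μ2 ≥ 0 := by apply mul_nonneg <;> linarith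
  have t6 : ((νinf : ℝ) - ν3) * μ3 ≥ 0 := by apply mul_nonneg <;> linarith
  constructor
  · rw [key]; linarith
  · intro h
    rw [key] at h
    have e1 : ((νf : ℝ) - 4 * νinf) * β = 0 := by linarith
    have e3 : ((νinf : ℝ) - ν0) * μ0 = 0 := by linarith
    have e4 : ((νinf : ℝ) - ν1) * μ1 = 0 := by linarith
    have e5 : ((νinf : ℝ) - ν2) * μ2 = 0 := by linarith
    have e6 : ((νinf : ℝ) - ν3) * μ3 = 0 := by linarith
    have hf : (νf : ℝ) = 4 * νinf := by
      rcases mul_eq_zero.1 e1 with h' | h'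
      · linarith
      · linarith
    have h0 : (νinf : ℝ) = ν0 := by
      rcases mul_eq_zero.1 e3 with h' | h' <;> linarith
    have h1 : (νinf : ℝ) = ν1 := by
      rcases mul_eq_zero.1 e4 with h' | h' <;> linarith
    have h2 : (νinf : ℝ) = ν2 := by
      rcases mul_eq_zero.1 e5 with h' | h' <;> linarith
    have h3 : (νinf : ℝ) = ν3 := by
      rcases mul_eq_zero.1 e6 with h' | h' <;> linarith
    have hz : (νinf : ℝ) = 0 := by linarith
    refine ⟨?_, ?_, ?_, ?_, ?_, ?_⟩
    · exact_mod_cast (by linarith : (νf : ℝ) = 0)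
    · exact_mod_cast (by linarith : (νinf : ℝ) = 0)
    · exact_mod_cast (by linarith : (ν0 : ℝ) = 0)
    · exact_mod_cast (by linarith : (ν1 : ℝ) = 0)
    · exact_mod_cast (by linarith : (ν2 : ℝ) = 0)
    · exact_mod_cast (by linarith : (ν3 : ℝ) = 0)
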